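/- arXiv:2310.01683 — 2 statements merged into one kernel-verified Lean document; each statement's English description precedes it below -/
import Mathlib

section
/- For Z₁, Z₂ independent standard Gaussian random variables and c ∈ [−1,1], the quantity 2·E[φ(Z₁)·φ(cZ₁ + √(1−c²)Z₂)], where φ(x) = max(x,0) is the ReLU function, equals (1/π)(c·arcsin(c) + √(1−c²)) + c/2. -/
open MeasureTheory ProbabilityTheory

/-!
Write `c = cos α` with `α ∈ [0, π]`, so that `√(1 - c²) = sin α`. In polar coordinates
`z = r (cos θ, sin θ)` the standard Gaussian density is `exp (-r² / 2) / 2π` and the integrand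
is `r² φ(cos θ) φ(cos (θ - α))`, so the integral factors into the radial moment
`∫ r³ exp (-r² / 2) dr = 2` and an angular integral over the arc `θ ∈ [α - π/2, π/2]`
on which both cosines are nonnegative.
-/

open Real Set
open scoped NNReal

section GaussianProd

variable {μ₁ μ₂ : ℝ} {v₁ v₂ : ℝ≥0}

lemma gaussianReal_prod_gaussianReal (h₁ : v₁ ≠ 0) (h₂ : v₂ ≠ 0) :
    (gaussianReal μ₁ v₁).prod (gaussianReal μ₂ v₂)
      = volume.withDensity fun z ↦ gaussianPDF μ₁ v₁ z.1 * gaussianPDF μ₂ v₂ z.2 := by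
  rw [gaussianReal_of_var_ne_zero _ h₁, gaussianReal_of_var_ne_zero _ h₂,
    prod_withDensity (measurable_gaussianPDF _ _) (measurable_gaussianPDF _ _),
    Measure.volume_eq_prod]

lemma integral_gaussianReal_prod_eq_integral_smul {E : Type*} [NormedAddCommGroup E]
    [NormedSpace ℝ E] {f : ℝ × ℝ → E} (h₁ : v₁ ≠ 0) (h₂ : v₂ ≠ 0) :
    ∫ z, f z ∂(gaussianReal μ₁ v₁).prod (gaussianReal μ₂ v₂)
      = ∫ z, (gaussianPDFReal μ₁ v₁ z.1 * gaussianPDFReal μ₂ v₂ z.2) • f z := by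
  rw [gaussianReal_prod_gaussianReal h₁ h₂, integral_withDensity_eq_integral_toReal_smul
    (by fun_prop) (ae_of_all _ fun _ ↦ ENNReal.mul_lt_top gaussianPDF_lt_top gaussianPDF_lt_top)]
  simp [gaussianPDF, ENNReal.toReal_mul, gaussianPDFReal_nonneg]

end GaussianProd

lemma gaussianPDFReal_mul_gaussianPDFReal_polarCoord_symm (p : ℝ × ℝ) :
    gaussianPDFReal 0 1 (polarCoord.symm p).1 * gaussianPDFReal 0 1 (polarCoord.symm p).2
      = (2 * π)⁻¹ * exp (-p.1 ^ 2 / 2) := by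
  obtain ⟨r, θ⟩ := p
  have hsq : √(2 * π) * √(2 * π) = 2 * π := mul_self_sqrt (by positivity)
  simp only [gaussianPDFReal, polarCoord_symm_apply, NNReal.coe_one, mul_one, sub_zero]
  rw [mul_mul_mul_comm, ← mul_inv, hsq, ← exp_add]
  congr 2
  linear_combination (-r ^ 2 / 2) * sin_sq_add_cos_sq θ

lemma integral_Ioi_pow_three_mul_exp_neg_sq_div_two :
    ∫ r in Ioi (0 : ℝ), r ^ 3 * exp (-r ^ 2 / 2) = 2 := by
  have h := integral_rpow_mul_exp_neg_mul_rpow (p := 2) (q := 3) (b := 1 / 2)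
    two_pos (by norm_num) (by norm_num)
  norm_num at h
  refine (setIntegral_congr_fun measurableSet_Ioi fun r _ ↦ ?_).trans h
  ring_nf

lemma integral_cos_mul_cos_sub (α : ℝ) :
    ∫ θ in (α - π / 2)..(π / 2), cos θ * cos (θ - α)
      = (sin α + (π - α) * cos α) / 2 := by
  -- product-to-sum: `cos θ cos (θ - α) = (cos α + cos (2θ - α)) / 2`
  have hF (θ : ℝ) : HasDerivAt (fun t ↦ t * cos α / 2 + sin (2 * t - α) / 4)
      (cos θ * cos (θ - α)) θ := by
    refine ((((hasDerivAt_id θ).mul_const (cos α)).div_const 2).add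
      ((((hasDerivAt_id θ).const_mul 2).sub_const α).sin.div_const 4)).congr_deriv ?_
    simp only [id, cos_sub, cos_two_mul, sin_two_mul]
    ring
  rw [intervalIntegral.integral_eq_sub_of_hasDerivAt (fun θ _ ↦ hF θ)
    ((by fun_prop : Continuous fun θ ↦ cos θ * cos (θ - α)).intervalIntegrable _ _)]
  rw [show 2 * (π / 2) - α = π - α by ring, show 2 * (α - π / 2) - α = α - π by ring,
    sin_pi_sub, sin_sub_pi]
  ring

lemma integral_relu_cos_mul_relu_cos_sub {α : ℝ} (h₀ : 0 ≤ α) (hπ : α ≤ π) :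
    ∫ θ in Ioo (-π) π, max (cos θ) 0 * max (cos (θ - α)) 0
      = (sin α + (π - α) * cos α) / 2 := by
  set g := fun θ ↦ max (cos θ) 0 * max (cos (θ - α)) 0
  have hg (a b : ℝ) : IntervalIntegrable g volume a b := by
    apply Continuous.intervalIntegrable; fun_prop
  have hleft : ∫ θ in (-π)..(α - π / 2), g θ = 0 := by
    refine intervalIntegral.integral_zero_ae (ae_of_all _ fun θ hθ ↦ ?_)
    rw [uIoc_of_le (by linarith)] at hθ
    rcases le_or_gt θ (-(π / 2)) with h | h
    · have : cos θ ≤ 0 := by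
        rw [← cos_neg]
        exact cos_nonpos_of_pi_div_two_le_of_le (by linarith) (by linarith [hθ.1])
      simp [g, this]
    · have : cos (θ - α) ≤ 0 := by
        rw [← cos_neg]
        exact cos_nonpos_of_pi_div_two_le_of_le (by linarith [hθ.2]) (by linarith)
      simp [g, this]
  have hright : ∫ θ in (π / 2)..π, g θ = 0 := by
    refine intervalIntegral.integral_zero_ae (ae_of_all _ fun θ hθ ↦ ?_)
    rw [uIoc_of_le (by linarith [pi_pos])] at hθ
    have : cos θ ≤ 0 := cos_nonpos_of_pi_div_two_le_of_le hθ.1.le (by linarith [hθ.2])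
    simp [g, this]
  have hmid : ∫ θ in (α - π / 2)..(π / 2), g θ
      = ∫ θ in (α - π / 2)..(π / 2), cos θ * cos (θ - α) := by
    refine intervalIntegral.integral_congr fun θ hθ ↦ ?_
    rw [uIcc_of_le (by linarith)] at hθ
    have h₁ : 0 ≤ cos θ := cos_nonneg_of_mem_Icc ⟨by linarith [hθ.1], hθ.2⟩
    have h₂ : 0 ≤ cos (θ - α) :=
      cos_nonneg_of_mem_Icc ⟨by linarith [hθ.1], by linarith [hθ.2]⟩
    simp only [g, max_eq_left h₁, max_eq_left h₂]
  rw [← integral_Ioc_eq_integral_Ioo, ← intervalIntegral.integral_of_le (by linarith [pi_pos]),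
    ← intervalIntegral.integral_add_adjacent_intervals (hg (-π) (α - π / 2)) (hg _ π),
    ← intervalIntegral.integral_add_adjacent_intervals (hg (α - π / 2) (π / 2)) (hg _ π),
    hleft, hmid, hright, integral_cos_mul_cos_sub]
  ring

lemma integral_relu_mul_relu_cos_sin_gaussianReal_prod {α : ℝ} (h₀ : 0 ≤ α)
    (hπ : α ≤ π) :
    ∫ z, max z.1 0 * max (cos α * z.1 + sin α * z.2) 0
        ∂(gaussianReal 0 1).prod (gaussianReal 0 1)
      = (sin α + (π - α) * cos α) / (2 * π) := by
  have hpolar : ∀ p ∈ polarCoord.target, p.1 •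
      ((gaussianPDFReal 0 1 (polarCoord.symm p).1 * gaussianPDFReal 0 1 (polarCoord.symm p).2) •
        (max (polarCoord.symm p).1 0 *
          max (cos α * (polarCoord.symm p).1 + sin α * (polarCoord.symm p).2) 0))
      = (2 * π)⁻¹ * (p.1 ^ 3 * exp (-p.1 ^ 2 / 2)) *
          (max (cos p.2) 0 * max (cos (p.2 - α)) 0) := by
    rintro ⟨r, θ⟩ ⟨hr : 0 < r, -⟩
    have hrelu (x : ℝ) : max (r * x) 0 = r * max x 0 := by
      rw [mul_max_of_nonneg _ _ hr.le, mul_zero]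
    have hrot : cos α * (r * cos θ) + sin α * (r * sin θ) = r * cos (θ - α) := by
      rw [cos_sub]; ring
    rw [smul_eq_mul, smul_eq_mul, gaussianPDFReal_mul_gaussianPDFReal_polarCoord_symm]
    simp only [polarCoord_symm_apply, hrot, hrelu]
    ring
  rw [integral_gaussianReal_prod_eq_integral_smul one_ne_zero one_ne_zero,
    ← integral_comp_polarCoord_symm,
    setIntegral_congr_fun polarCoord.open_target.measurableSet hpolar, polarCoord_target,
    Measure.volume_eq_prod, ← Measure.prod_restrict,
    integral_prod_mul (fun r ↦ (2 * π)⁻¹ * (r ^ 3 * exp (-r ^ 2 / 2)))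
      (fun θ ↦ max (cos θ) 0 * max (cos (θ - α)) 0), integral_const_mul,
    integral_Ioi_pow_three_mul_exp_neg_sq_div_two, integral_relu_cos_mul_relu_cos_sub h₀ hπ]
  field_simp

/-- For independent standard Gaussians Z₁, Z₂ and c ∈ [−1,1],
2·E[φ(Z₁)·φ(cZ₁ + √(1−c²)Z₂)] = (1/π)(c·arcsin c + √(1−c²)) + c/2,
where φ = ReLU. -/
theorem relu_gaussian_correlation (c : ℝ) (hc : c ∈ Set.Icc (-1 : ℝ) 1) :
    2 * ∫ z : ℝ × ℝ,
        max z.1 0 * max (c * z.1 + Real.sqrt (1 - c ^ 2) * z.2) 0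
        ∂((gaussianReal 0 1).prod (gaussianReal 0 1))
      = (1 / Real.pi) * (c * Real.arcsin c + Real.sqrt (1 - c ^ 2)) + c / 2 := by
  have h := integral_relu_mul_relu_cos_sin_gaussianReal_prod (arccos_nonneg c) (arccos_le_pi c)
  rw [cos_arccos hc.1 hc.2, sin_arccos] at h
  rw [h, arccos_eq_pi_div_two_sub_arcsin]
  field_simp
  ring
end

section
/- Let α, β be stable sequences of scaling factors with sup-norms ‖α‖_S², ‖β‖_S² ≤ M. Define Q_l^α by Q_0^α = ‖a‖²/d and Q_l^α = (1 + α_{l,L}²/2)Q_{l−1}^α, and similarly Q_l^β with β. Then for all L ≥ 1, sup_{1≤l≤L} |Q_l^α − Q_l^β| ≤ (‖a‖²/(2d))·e^{M}·Σ_{l=1}^{L}|α_{l,L}² − β_{l,L}²|. -/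
open Finset

/-- Sensitivity of the variance recursion to the scaling factors:
if Q^α, Q^β follow the recursion Q_l = (1+γ_l²/2)Q_{l−1} from Q₀ = ‖a‖²/d, with
Σ α_l² ≤ M and Σ β_l² ≤ M, then
sup_{l≤L}|Q_l^α − Q_l^β| ≤ (‖a‖²/(2d))e^M Σ_{l=1}^L |α_l² − β_l²|. -/
theorem variance_sensitivity (d : ℕ) (hd : 0 < d) (a : EuclideanSpace ℝ (Fin d))
    (ha : a ≠ 0) (L : ℕ) (α β : ℕ → ℝ) (hα : ∀ l, 0 ≤ α l) (hβ : ∀ l, 0 ≤ β l)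
    (M : ℝ) (hMα : ∑ l ∈ Icc 1 L, (α l) ^ 2 ≤ M) (hMβ : ∑ l ∈ Icc 1 L, (β l) ^ 2 ≤ M)
    (Qα Qβ : ℕ → ℝ)
    (h0α : Qα 0 = ‖a‖ ^ 2 / d) (h0β : Qβ 0 = ‖a‖ ^ 2 / d)
    (hrecα : ∀ l, 1 ≤ l → l ≤ L → Qα l = (1 + (α l) ^ 2 / 2) * Qα (l - 1))
    (hrecβ : ∀ l, 1 ≤ l → l ≤ L → Qβ l = (1 + (β l) ^ 2 / 2) * Qβ (l - 1)) :
    ∀ l ≤ L, |Qα l - Qβ l| ≤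
      (‖a‖ ^ 2 / (2 * d)) * Real.exp M * ∑ l ∈ Icc 1 L, |(α l) ^ 2 - (β l) ^ 2| := by
  set Q0 : ℝ := ‖a‖ ^ 2 / d with hQ0def
  have hQ0 : 0 < Q0 := by
    apply div_pos (pow_pos (norm_pos_iff.mpr ha) 2)
    exact_mod_cast hd
  have hM0 : 0 ≤ M := le_trans (Finset.sum_nonneg fun i _ => sq_nonneg _) hMα
  -- partial sums bounded by M
  have hpartα : ∀ l ≤ L, ∑ i ∈ Icc 1 l, (α i) ^ 2 ≤ M := by
    intro l hl
    refine le_trans (Finset.sum_le_sum_of_subset_of_nonneg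
      (Finset.Icc_subset_Icc_right hl) (fun i _ _ => sq_nonneg _)) hMα
  have hpartβ : ∀ l ≤ L, ∑ i ∈ Icc 1 l, (β i) ^ 2 ≤ M := by
    intro l hl
    refine le_trans (Finset.sum_le_sum_of_subset_of_nonneg
      (Finset.Icc_subset_Icc_right hl) (fun i _ _ => sq_nonneg _)) hMβ
  -- Qβ is nonneg and bounded
  have hQβ : ∀ l, l ≤ L → 0 ≤ Qβ l ∧ Qβ l ≤ Q0 * Real.exp ((∑ i ∈ Icc 1 l, (β i) ^ 2) / 2) := by
    intro l
    induction l with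
    | zero =>
      intro _
      simp [h0β, ← hQ0def, hQ0.le]
    | succ n ih =>
      intro hl
      have hn : n ≤ L := Nat.le_of_succ_le hl
      obtain ⟨ih0, ih1⟩ := ih hn
      have hrec := hrecβ (n + 1) (Nat.succ_le_succ (Nat.zero_le n)) hl
      simp only [Nat.add_sub_cancel] at hrec
      have hfac : (0:ℝ) ≤ 1 + (β (n + 1)) ^ 2 / 2 := by positivity
      constructor
      · rw [hrec]; exact mul_nonneg hfac ih0
      · rw [hrec, Finset.sum_Icc_succ_top (Nat.succ_le_succ (Nat.zero_le n))]
        have h1 : 1 + (β (n + 1)) ^ 2 / 2 ≤ Real.exp ((β (n + 1)) ^ 2 / 2) := by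
          have := Real.add_one_le_exp ((β (n + 1)) ^ 2 / 2)
          linarith
        calc (1 + (β (n + 1)) ^ 2 / 2) * Qβ n
            ≤ Real.exp ((β (n + 1)) ^ 2 / 2) *
              (Q0 * Real.exp ((∑ i ∈ Icc 1 n, (β i) ^ 2) / 2)) :=
              mul_le_mul h1 ih1 ih0 (Real.exp_pos _).le
          _ = Q0 * Real.exp (((∑ i ∈ Icc 1 n, (β i) ^ 2) + (β (n + 1)) ^ 2) / 2) := by
              rw [show Real.exp ((β (n + 1)) ^ 2 / 2) *
                    (Q0 * Real.exp ((∑ i ∈ Icc 1 n, (β i) ^ 2) / 2)) =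
                  Q0 * (Real.exp ((∑ i ∈ Icc 1 n, (β i) ^ 2) / 2) *
                    Real.exp ((β (n + 1)) ^ 2 / 2)) from by ring,
                ← Real.exp_add, add_div]
  -- product bound
  have hP1 : ∀ l : ℕ, (1:ℝ) ≤ ∏ j ∈ Icc 1 l, (1 + (α j) ^ 2 / 2) := by
    intro l
    have := Finset.prod_le_prod (s := Icc 1 l) (f := fun _ => (1:ℝ))
      (g := fun j => 1 + (α j) ^ 2 / 2) (fun i _ => zero_le_one)
      (fun i _ => by nlinarith [sq_nonneg (α i)])
    simpa using this
  have hPle : ∀ l ≤ L, ∏ j ∈ Icc 1 l, (1 + (α j) ^ 2 / 2) ≤ Real.exp (M / 2) := by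
    intro l hl
    calc ∏ j ∈ Icc 1 l, (1 + (α j) ^ 2 / 2)
        ≤ ∏ j ∈ Icc 1 l, Real.exp ((α j) ^ 2 / 2) := by
          refine Finset.prod_le_prod (fun j _ => by positivity) (fun j _ => ?_)
          have := Real.add_one_le_exp ((α j) ^ 2 / 2)
          linarith
      _ = Real.exp (∑ j ∈ Icc 1 l, (α j) ^ 2 / 2) := (Real.exp_sum _ _).symm
      _ ≤ Real.exp (M / 2) := by
          apply Real.exp_le_exp.mpr
          rw [← Finset.sum_div]
          exact div_le_div_of_nonneg_right (hpartα l hl) (by norm_num)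
  -- main induction
  have key : ∀ l, l ≤ L → |Qα l - Qβ l| ≤
      (Q0 / 2) * Real.exp (M / 2) * (∏ j ∈ Icc 1 l, (1 + (α j) ^ 2 / 2)) *
        ∑ i ∈ Icc 1 l, |(α i) ^ 2 - (β i) ^ 2| := by
    intro l
    induction l with
    | zero => intro _; simp [h0α, h0β]
    | succ n ih =>
      intro hl
      have hn : n ≤ L := Nat.le_of_succ_le hl
      have ihn := ih hn
      have h1n : (1:ℕ) ≤ n + 1 := Nat.succ_le_succ (Nat.zero_le n)
      have hrα := hrecα (n + 1) h1n hl
      have hrβ := hrecβ (n + 1) h1n hl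
      simp only [Nat.add_sub_cancel] at hrα hrβ
      obtain ⟨hβ0, hβ1⟩ := hQβ n hn
      have hβbd : Qβ n ≤ Q0 * Real.exp (M / 2) := by
        refine hβ1.trans ?_
        have : (∑ i ∈ Icc 1 n, (β i) ^ 2) / 2 ≤ M / 2 :=
          div_le_div_of_nonneg_right (hpartβ n hn) (by norm_num)
        exact mul_le_mul_of_nonneg_left (Real.exp_le_exp.mpr this) hQ0.le
      have hdiff : Qα (n+1) - Qβ (n+1)
          = (1 + (α (n+1)) ^ 2 / 2) * (Qα n - Qβ n)
            + ((α (n+1)) ^ 2 - (β (n+1)) ^ 2) / 2 * Qβ n := by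
        rw [hrα, hrβ]; ring
      have hfac : (0:ℝ) ≤ 1 + (α (n+1)) ^ 2 / 2 := by positivity
      have step1 : |Qα (n+1) - Qβ (n+1)|
          ≤ (1 + (α (n+1)) ^ 2 / 2) * |Qα n - Qβ n|
            + |(α (n+1)) ^ 2 - (β (n+1)) ^ 2| / 2 * (Q0 * Real.exp (M / 2)) := by
        rw [hdiff]
        refine (abs_add_le _ _).trans (add_le_add ?_ ?_)
        · rw [abs_mul, abs_of_nonneg hfac]
        · rw [abs_mul, abs_div, abs_two, abs_of_nonneg hβ0]
          exact mul_le_mul_of_nonneg_left hβbd (by positivity)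
      rw [Finset.sum_Icc_succ_top h1n, Finset.prod_Icc_succ_top h1n]
      have hPn1 := hP1 n
      have hSn : (0:ℝ) ≤ ∑ i ∈ Icc 1 n, |(α i) ^ 2 - (β i) ^ 2| :=
        Finset.sum_nonneg fun i _ => abs_nonneg _
      refine step1.trans ?_
      have t1 : (1 + (α (n+1)) ^ 2 / 2) * |Qα n - Qβ n|
          ≤ (Q0 / 2) * Real.exp (M / 2) *
            ((∏ j ∈ Icc 1 n, (1 + (α j) ^ 2 / 2)) * (1 + (α (n+1)) ^ 2 / 2)) *
            ∑ i ∈ Icc 1 n, |(α i) ^ 2 - (β i) ^ 2| := by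
        have := mul_le_mul_of_nonneg_left ihn hfac
        calc (1 + (α (n+1)) ^ 2 / 2) * |Qα n - Qβ n| ≤
            (1 + (α (n+1)) ^ 2 / 2) * ((Q0 / 2) * Real.exp (M / 2) *
              (∏ j ∈ Icc 1 n, (1 + (α j) ^ 2 / 2)) *
              ∑ i ∈ Icc 1 n, |(α i) ^ 2 - (β i) ^ 2|) := this
          _ = _ := by ring
      have t2 : |(α (n+1)) ^ 2 - (β (n+1)) ^ 2| / 2 * (Q0 * Real.exp (M / 2))
          ≤ (Q0 / 2) * Real.exp (M / 2) *
            ((∏ j ∈ Icc 1 n, (1 + (α j) ^ 2 / 2)) * (1 + (α (n+1)) ^ 2 / 2)) *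
            |(α (n+1)) ^ 2 - (β (n+1)) ^ 2| := by
        have hP' : (1:ℝ) ≤ (∏ j ∈ Icc 1 n, (1 + (α j) ^ 2 / 2)) * (1 + (α (n+1)) ^ 2 / 2) :=
          one_le_mul_of_one_le_of_one_le hPn1 (by nlinarith [sq_nonneg (α (n+1))])
        calc |(α (n+1)) ^ 2 - (β (n+1)) ^ 2| / 2 * (Q0 * Real.exp (M / 2))
            = (|(α (n+1)) ^ 2 - (β (n+1)) ^ 2| / 2 * (Q0 * Real.exp (M / 2))) * 1 := by ring
          _ ≤ (|(α (n+1)) ^ 2 - (β (n+1)) ^ 2| / 2 * (Q0 * Real.exp (M / 2))) *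
              ((∏ j ∈ Icc 1 n, (1 + (α j) ^ 2 / 2)) * (1 + (α (n+1)) ^ 2 / 2)) :=
              mul_le_mul_of_nonneg_left hP' (by positivity)
          _ = _ := by ring
      calc _ ≤ (Q0 / 2) * Real.exp (M / 2) *
            ((∏ j ∈ Icc 1 n, (1 + (α j) ^ 2 / 2)) * (1 + (α (n+1)) ^ 2 / 2)) *
            (∑ i ∈ Icc 1 n, |(α i) ^ 2 - (β i) ^ 2|)
          + (Q0 / 2) * Real.exp (M / 2) *
            ((∏ j ∈ Icc 1 n, (1 + (α j) ^ 2 / 2)) * (1 + (α (n+1)) ^ 2 / 2)) *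
            |(α (n+1)) ^ 2 - (β (n+1)) ^ 2| := add_le_add t1 t2
        _ = _ := by ring
  intro l hl
  have hkey := key l hl
  have hSsub : (∑ i ∈ Icc 1 l, |(α i) ^ 2 - (β i) ^ 2|)
      ≤ ∑ i ∈ Icc 1 L, |(α i) ^ 2 - (β i) ^ 2| :=
    Finset.sum_le_sum_of_subset_of_nonneg (Finset.Icc_subset_Icc_right hl)
      (fun i _ _ => abs_nonneg _)
  have hSnn : (0:ℝ) ≤ ∑ i ∈ Icc 1 l, |(α i) ^ 2 - (β i) ^ 2| :=
    Finset.sum_nonneg fun i _ => abs_nonneg _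
  have hPl := hPle l hl
  have hexp : Real.exp (M / 2) * Real.exp (M / 2) = Real.exp M := by
    rw [← Real.exp_add]; ring_nf
  have hfinal : (Q0 / 2) * Real.exp (M / 2) * (∏ j ∈ Icc 1 l, (1 + (α j) ^ 2 / 2)) *
        ∑ i ∈ Icc 1 l, |(α i) ^ 2 - (β i) ^ 2|
      ≤ (Q0 / 2) * Real.exp M * ∑ i ∈ Icc 1 L, |(α i) ^ 2 - (β i) ^ 2| := by
    rw [← hexp]
    calc (Q0 / 2) * Real.exp (M / 2) * (∏ j ∈ Icc 1 l, (1 + (α j) ^ 2 / 2)) *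
          ∑ i ∈ Icc 1 l, |(α i) ^ 2 - (β i) ^ 2|
        ≤ (Q0 / 2) * Real.exp (M / 2) * Real.exp (M / 2) *
          ∑ i ∈ Icc 1 L, |(α i) ^ 2 - (β i) ^ 2| := by
          apply mul_le_mul
          · exact mul_le_mul_of_nonneg_left hPl (by positivity)
          · exact hSsub
          · exact hSnn
          · positivity
      _ = (Q0 / 2) * (Real.exp (M / 2) * Real.exp (M / 2)) *
          ∑ i ∈ Icc 1 L, |(α i) ^ 2 - (β i) ^ 2| := by ring
  have hQ02 : Q0 / 2 = ‖a‖ ^ 2 / (2 * d) := by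
    rw [hQ0def]; ring
  rw [← hQ02]
  exact hkey.trans hfinal
end
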